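/- For δ > 1 and m_n = ⌈δ^n⌉, let U_{δ,n} = {ω : ∃k, m_n ≤ k ≤ m_{n+1} and S_k − k/2 > δ·√((1/2)·m_n·ln ln m_n)}, where S_k = ∑_{i=1}^k ω_i. Then L(U_{δ,n}) ≤ c·e^{−δ·ln ln m_n} for some constant c > 0, which is of order n^{−δ}; consequently ∑_n L(U_{δ,n}) < ∞. -/

import Mathlib

open MeasureTheory Filter Asymptotics
open scoped ENNReal

/-- The length-`n` prefix of an infinite binary sequence, as a list. -/
def pref (ω : ℕ → Bool) (n : ℕ) : List Bool := (List.range n).map ω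

/-- `a` is a (finite) prefix of the infinite sequence `ω`. -/
def PrefixOf (a : List Bool) (ω : ℕ → Bool) : Prop := pref ω a.length = a

/-- The cylinder set of infinite sequences extending the string `x`. -/
def Cyl (x : List Bool) : Set (ℕ → Bool) := {ω | PrefixOf x ω}

/-- Plain Kolmogorov complexity of `x` with respect to a decoding function `U`. -/
noncomputable def PC (U : List Bool →. List Bool) (x : List Bool) : ℕ :=
  sInf {n | ∃ p : List Bool, p.length = n ∧ x ∈ U p}

/-- `U` is an optimal (universal) partial computable decoding function for plain complexity. -/
def PlainOptimal (U : List Bool →. List Bool) : Prop :=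
  Partrec U ∧
    ∀ V : List Bool →. List Bool, Partrec V → ∃ c : ℕ, ∀ x p : List Bool,
      x ∈ V p → PC U x ≤ p.length + c

/-- An r.e. monotone machine representation: `R p x` means that on program `p`
the machine (eventually) outputs an extension of `x`. -/
def MonotoneRepr (R : List Bool → List Bool → Prop) : Prop :=
  REPred (fun q : List Bool × List Bool => R q.1 q.2) ∧
  (∀ p x p' x', R p x → R p' x' → p <+: p' → (x <+: x' ∨ x' <+: x)) ∧
  (∀ p x x', R p x → x' <+: x → R p x')

/-- Monotone complexity with respect to a monotone machine representation `R`. -/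
noncomputable def KmR (R : List Bool → List Bool → Prop) (x : List Bool) : ℕ :=
  sInf {n | ∃ p : List Bool, p.length = n ∧ R p x}

/-- `R` is an optimal monotone machine, so `KmR R` is the monotone complexity `Km`. -/
def MonotoneOptimal (R : List Bool → List Bool → Prop) : Prop :=
  MonotoneRepr R ∧
    ∀ R', MonotoneRepr R' → ∃ c : ℕ, ∀ x p : List Bool, R' p x → KmR R x ≤ p.length + c

/-- `S_k(ω) = ∑_{i=1}^k ω_i`, the number of ones among the first `k` bits. -/
def S (ω : ℕ → Bool) (k : ℕ) : ℕ := (pref ω k).count true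

/-- The LIL deviation set `U_{δ,n}` with `m_n = ⌈δ^n⌉`. -/
noncomputable def ULIL (δ : ℝ) (n : ℕ) : Set (ℕ → Bool) :=
  {ω | ∃ k : ℕ, ⌈δ ^ n⌉₊ ≤ k ∧ k ≤ ⌈δ ^ (n + 1)⌉₊ ∧
    (S ω k : ℝ) - k / 2 > δ * Real.sqrt ((1 / 2) * ⌈δ ^ n⌉₊ * Real.log (Real.log (⌈δ ^ n⌉₊ : ℝ)))}

/-!
Along a path, stop the walk `S_k - k/2` when it first reaches `a`. The prefixes up to that hitting
time cover the event `max_{k ≤ N} (S_k - k/2) ≥ a`, and an induction on `N` (each step of `±1/2`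
costs a factor `cosh (l/2) ≤ e^{l²/8}`) bounds their total measure by `e^{N l²/8 - l a}`; with
`l = 4a/N` this is the maximal Hoeffding bound `e^{-2a²/N}`. For `a = δ √(m_n ln ln m_n / 2)` and
`N = m_{n+1} ≤ δ m_n + 1` the exponent is at most `δ - δ ln ln m_n`, and
`e^{-δ ln ln m_n} = (ln m_n)^{-δ} ≤ (n ln δ)^{-δ}` is summable because `δ > 1`.
-/

def shiftSeq (ω : ℕ → Bool) : ℕ → Bool := fun i => ω (i + 1)

lemma pref_succ (ω : ℕ → Bool) (n : ℕ) : pref ω (n + 1) = ω 0 :: pref (shiftSeq ω) n := by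
  simp [pref, shiftSeq, List.range_succ_eq_map, Function.comp_def]

lemma S_zero (ω : ℕ → Bool) : S ω 0 = 0 := by
  simp [S, pref]

lemma S_succ (ω : ℕ → Bool) (k : ℕ) : S ω (k + 1) = (ω 0).toNat + S (shiftSeq ω) k := by
  cases h : ω 0 <;> simp [S, pref_succ, h, Nat.add_comm]

lemma S_succ_sub_half (ω : ℕ → Bool) (k : ℕ) :
    (S ω (k + 1) : ℝ) - (k + 1 : ℕ) / 2
      = (if ω 0 then 1 / 2 else -1 / 2) + ((S (shiftSeq ω) k : ℝ) - k / 2) := by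
  rw [S_succ]
  cases ω 0 <;> simp <;> ring

lemma Cyl_nil : Cyl [] = Set.univ := by
  ext ω
  simp [Cyl, PrefixOf, pref]

lemma mem_Cyl_cons {ω : ℕ → Bool} {t : Bool} {x : List Bool} :
    ω ∈ Cyl (t :: x) ↔ ω 0 = t ∧ shiftSeq ω ∈ Cyl x := by
  simp [Cyl, PrefixOf, List.length_cons, pref_succ]

/-- The walk `v + (S_k - k/2)` is stopped when it first reaches `a`: the cover consists of the
prefixes up to that hitting time, for the paths that hit `a` within `N` steps. -/
noncomputable def hitCover (a : ℝ) : ℕ → ℝ → Finset (List Bool)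
  | 0, v => if a ≤ v then {[]} else ∅
  | N + 1, v => if a ≤ v then {[]} else
      (hitCover a N (v + 1 / 2)).image (List.cons true) ∪
        (hitCover a N (v - 1 / 2)).image (List.cons false)

lemma subset_biUnion_hitCover (a : ℝ) (N : ℕ) (v : ℝ) :
    {ω | ∃ k ≤ N, a ≤ v + ((S ω k : ℝ) - k / 2)} ⊆ ⋃ x ∈ hitCover a N v, Cyl x := by
  induction N generalizing v with
  | zero =>
    rintro ω ⟨k, hk, hak⟩
    obtain rfl : k = 0 := Nat.le_zero.1 hk
    simp_all [hitCover, S_zero, Cyl_nil]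
  | succ N ih =>
    rintro ω ⟨k, hk, hak⟩
    by_cases hav : a ≤ v
    · simp [hitCover, hav, Cyl_nil]
    obtain _ | k := k
    · simp [S_zero] at hak; exact absurd hak hav
    rw [S_succ_sub_half] at hak
    simp only [hitCover, hav, if_false, Finset.mem_union, Finset.mem_image, Set.mem_iUnion]
    cases ht : ω 0
    · simp only [ht, Bool.false_eq_true, if_false] at hak
      obtain ⟨x, hx, hωx⟩ := Set.mem_iUnion₂.1 <|
        ih (v - 1 / 2) (show shiftSeq ω ∈ _ from ⟨k, by omega, by linarith⟩)
      exact ⟨false :: x, Or.inr ⟨x, hx, rfl⟩, mem_Cyl_cons.2 ⟨ht, hωx⟩⟩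
    · simp only [ht, if_true] at hak
      obtain ⟨x, hx, hωx⟩ := Set.mem_iUnion₂.1 <|
        ih (v + 1 / 2) (show shiftSeq ω ∈ _ from ⟨k, by omega, by linarith⟩)
      exact ⟨true :: x, Or.inl ⟨x, hx, rfl⟩, mem_Cyl_cons.2 ⟨ht, hωx⟩⟩

lemma sum_image_cons (T : Finset (List Bool)) (t : Bool) :
    ∑ x ∈ T.image (List.cons t), (2 : ℝ)⁻¹ ^ x.length = 2⁻¹ * ∑ x ∈ T, (2 : ℝ)⁻¹ ^ x.length := by
  rw [Finset.sum_image List.cons_injective.injOn, Finset.mul_sum]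
  simp [pow_succ']

lemma sum_hitCover_le (a l : ℝ) (hl : 0 ≤ l) (N : ℕ) (v : ℝ) :
    ∑ x ∈ hitCover a N v, (2 : ℝ)⁻¹ ^ x.length ≤ Real.exp (N * l ^ 2 / 8 + l * (v - a)) := by
  induction N generalizing v with
  | zero =>
    by_cases hav : a ≤ v
    · simpa [hitCover, hav] using Real.one_le_exp (by positivity)
    · simp [hitCover, hav, Real.exp_nonneg]
  | succ N ih =>
    by_cases hav : a ≤ v
    · simpa [hitCover, hav] using Real.one_le_exp (by positivity)
    have hdisj : Disjoint ((hitCover a N (v + 1 / 2)).image (List.cons true))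
        ((hitCover a N (v - 1 / 2)).image (List.cons false)) := by
      simp [Finset.disjoint_left]
    have hcosh : (Real.exp (l / 2) + Real.exp (-(l / 2))) / 2 ≤ Real.exp (l ^ 2 / 8) := by
      have := Real.cosh_le_exp_half_sq (l / 2)
      rwa [Real.cosh_eq, show (l / 2) ^ 2 / 2 = l ^ 2 / 8 by ring] at this
    set E := (N : ℝ) * l ^ 2 / 8 + l * (v - a) with hE
    calc ∑ x ∈ hitCover a (N + 1) v, (2 : ℝ)⁻¹ ^ x.length
        = 2⁻¹ * ∑ x ∈ hitCover a N (v + 1 / 2), (2 : ℝ)⁻¹ ^ x.length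
          + 2⁻¹ * ∑ x ∈ hitCover a N (v - 1 / 2), (2 : ℝ)⁻¹ ^ x.length := by
          rw [hitCover, if_neg hav, Finset.sum_union hdisj, sum_image_cons, sum_image_cons]
      _ ≤ 2⁻¹ * Real.exp (E + l / 2) + 2⁻¹ * Real.exp (E + -(l / 2)) := by
          gcongr
          · exact (ih _).trans_eq (by congr 1; ring)
          · exact (ih _).trans_eq (by congr 1; ring)
      _ = Real.exp E * ((Real.exp (l / 2) + Real.exp (-(l / 2))) / 2) := by
          rw [Real.exp_add E, Real.exp_add E]; ring
      _ ≤ Real.exp E * Real.exp (l ^ 2 / 8) := by gcongr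
      _ = Real.exp ((N + 1 : ℕ) * l ^ 2 / 8 + l * (v - a)) := by
          rw [← Real.exp_add, hE]
          congr 1
          push_cast
          ring

lemma measure_biUnion_Cyl_le {μ : Measure (ℕ → Bool)}
    (hμ : ∀ x : List Bool, μ (Cyl x) = (2 : ℝ≥0∞)⁻¹ ^ x.length) (T : Finset (List Bool)) :
    μ (⋃ x ∈ T, Cyl x) ≤ ENNReal.ofReal (∑ x ∈ T, (2 : ℝ)⁻¹ ^ x.length) := by
  calc μ (⋃ x ∈ T, Cyl x) ≤ ∑ x ∈ T, μ (Cyl x) := measure_biUnion_finset_le T Cyl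
    _ = ENNReal.ofReal (∑ x ∈ T, (2 : ℝ)⁻¹ ^ x.length) := by
      rw [ENNReal.ofReal_sum_of_nonneg (fun _ _ => by positivity)]
      simp [hμ, ENNReal.ofReal_pow, ENNReal.ofReal_inv_of_pos, ENNReal.inv_pow]

theorem measure_exists_le_sub_half_le {μ : Measure (ℕ → Bool)}
    (hμ : ∀ x : List Bool, μ (Cyl x) = (2 : ℝ≥0∞)⁻¹ ^ x.length) {a : ℝ} (ha : 0 ≤ a) (N : ℕ) :
    μ {ω | ∃ k ≤ N, a ≤ (S ω k : ℝ) - k / 2} ≤ ENNReal.ofReal (Real.exp (-2 * a ^ 2 / N)) := by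
  set l := 4 * a / N
  have hcover := subset_biUnion_hitCover a N 0
  simp only [zero_add] at hcover
  calc μ {ω | ∃ k ≤ N, a ≤ (S ω k : ℝ) - k / 2}
      ≤ ENNReal.ofReal (∑ x ∈ hitCover a N 0, (2 : ℝ)⁻¹ ^ x.length) :=
        (measure_mono hcover).trans (measure_biUnion_Cyl_le hμ _)
    _ ≤ ENNReal.ofReal (Real.exp (N * l ^ 2 / 8 + l * (0 - a))) :=
        ENNReal.ofReal_le_ofReal (sum_hitCover_le a l (by positivity) N 0)
    _ = ENNReal.ofReal (Real.exp (-2 * a ^ 2 / N)) := by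
        rcases eq_or_ne (N : ℝ) 0 with hN | hN
        · simp [l, hN]
        · congr 2; simp only [l]; field_simp; ring

lemma ceil_pow_succ_le {δ : ℝ} (hδ : 0 ≤ δ) (n : ℕ) :
    (⌈δ ^ (n + 1)⌉₊ : ℝ) ≤ δ * ⌈δ ^ n⌉₊ + 1 := by
  have hceil : (⌈δ ^ (n + 1)⌉₊ : ℝ) < δ ^ (n + 1) + 1 := Nat.ceil_lt_add_one (by positivity)
  have hpow : δ ^ (n + 1) ≤ δ * ⌈δ ^ n⌉₊ := by
    rw [pow_succ']
    exact mul_le_mul_of_nonneg_left (Nat.le_ceil _) hδ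
  linarith

lemma hoeffding_exponent_le {δ : ℝ} (hδ : 1 < δ) (m : ℕ) {N : ℝ} (hN : 0 < N)
    (hNm : N ≤ δ * m + 1) :
    -2 * (δ * Real.sqrt ((1 / 2) * m * Real.log (Real.log (m : ℝ)))) ^ 2 / N
      ≤ δ + -δ * Real.log (Real.log (m : ℝ)) := by
  set L := Real.log (Real.log (m : ℝ))
  rcases lt_or_ge L 0 with hL | hL
  · rw [Real.sqrt_eq_zero'.2 (by nlinarith [(Nat.cast_nonneg m : (0 : ℝ) ≤ m)])]
    have : δ * L < 0 := mul_neg_of_pos_of_neg (by linarith) hL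
    simp only [mul_zero, ne_eq, OfNat.ofNat_ne_zero, not_false_eq_true, zero_pow, zero_div]
    linarith
  have hLm : L ≤ m := (Real.log_le_self (Real.log_natCast_nonneg m)).trans
    (Real.log_le_self (Nat.cast_nonneg m))
  rw [mul_pow, Real.sq_sqrt (by positivity), div_le_iff₀ hN]
  rcases le_or_gt L 1 with hL1 | hL1
  · have hδ0 : 0 ≤ δ := by linarith
    nlinarith [mul_nonneg (mul_nonneg (mul_nonneg hδ0 hδ0) (Nat.cast_nonneg m)) hL,
      mul_nonneg (mul_nonneg hδ0 (by linarith : 0 ≤ 1 - L)) hN.le]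
  · nlinarith [mul_le_mul_of_nonneg_left hNm (by linarith : (0 : ℝ) ≤ L - 1)]

lemma measure_ULIL_le {μ : Measure (ℕ → Bool)}
    (hμ : ∀ x : List Bool, μ (Cyl x) = (2 : ℝ≥0∞)⁻¹ ^ x.length) {δ : ℝ} (hδ : 1 < δ) (n : ℕ) :
    μ (ULIL δ n) ≤ ENNReal.ofReal
      (Real.exp δ * Real.exp (-δ * Real.log (Real.log (⌈δ ^ n⌉₊ : ℝ)))) := by
  set a := δ * Real.sqrt ((1 / 2) * ⌈δ ^ n⌉₊ * Real.log (Real.log (⌈δ ^ n⌉₊ : ℝ)))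
  have hN : (0 : ℝ) < ⌈δ ^ (n + 1)⌉₊ := by
    exact_mod_cast Nat.ceil_pos.2 (by positivity)
  have hsub : ULIL δ n ⊆ {ω | ∃ k ≤ ⌈δ ^ (n + 1)⌉₊, a ≤ (S ω k : ℝ) - k / 2} :=
    fun ω ⟨k, _, hk, hgt⟩ => ⟨k, hk, hgt.le⟩
  calc μ (ULIL δ n) ≤ ENNReal.ofReal (Real.exp (-2 * a ^ 2 / ⌈δ ^ (n + 1)⌉₊)) :=
        (measure_mono hsub).trans (measure_exists_le_sub_half_le hμ (by positivity) _)
    _ ≤ _ := by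
        rw [← Real.exp_add]
        exact ENNReal.ofReal_le_ofReal <| Real.exp_le_exp.2 <|
          hoeffding_exponent_le hδ _ hN (ceil_pow_succ_le (by linarith) n)

lemma exp_neg_mul_log_log_ceil_pow_le {δ : ℝ} (hδ : 1 < δ) {n : ℕ} (hn : 1 ≤ n) :
    Real.exp (-δ * Real.log (Real.log (⌈δ ^ n⌉₊ : ℝ)))
      ≤ Real.log δ ^ (-δ) * (n : ℝ) ^ (-δ) := by
  have hlogδ : 0 < Real.log δ := Real.log_pos hδ
  have hy : n * Real.log δ ≤ Real.log (⌈δ ^ n⌉₊ : ℝ) := by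
    rw [← Real.log_pow]
    exact Real.log_le_log (by positivity) (Nat.le_ceil _)
  have hypos : 0 < Real.log (⌈δ ^ n⌉₊ : ℝ) :=
    lt_of_lt_of_le (mul_pos (by exact_mod_cast hn) hlogδ) hy
  calc Real.exp (-δ * Real.log (Real.log (⌈δ ^ n⌉₊ : ℝ)))
      = Real.log (⌈δ ^ n⌉₊ : ℝ) ^ (-δ) := by
        rw [Real.rpow_def_of_pos hypos, mul_comm]
    _ ≤ (n * Real.log δ) ^ (-δ) :=
        Real.rpow_le_rpow_of_nonpos (mul_pos (by exact_mod_cast hn) hlogδ) hy (by linarith)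
    _ = Real.log δ ^ (-δ) * (n : ℝ) ^ (-δ) := by
        rw [Real.mul_rpow (by positivity) hlogδ.le, mul_comm]

/-- `L(U_{δ,n}) ≤ c·e^{-δ ln ln m_n}` and `∑_n L(U_{δ,n}) < ∞`. -/
theorem stmt_13 (μ : Measure (ℕ → Bool))
    (hμ : ∀ x : List Bool, μ (Cyl x) = (2 : ℝ≥0∞)⁻¹ ^ x.length)
    (δ : ℝ) (hδ : 1 < δ) :
    (∃ c : ℝ, 0 < c ∧ ∀ n : ℕ, 1 ≤ n →
      μ (ULIL δ n) ≤ ENNReal.ofReal (c * Real.exp (-δ * Real.log (Real.log (⌈δ ^ n⌉₊ : ℝ))))) ∧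
    Summable fun n => (μ (ULIL δ n)).toReal := by
  refine ⟨⟨Real.exp δ, Real.exp_pos δ, fun n _ => measure_ULIL_le hμ hδ n⟩, ?_⟩
  have hpow : Summable fun n : ℕ => ((n + 1 : ℕ) : ℝ) ^ (-δ) :=
    (summable_nat_add_iff 1).2 (Real.summable_nat_rpow.2 (by linarith))
  rw [← summable_nat_add_iff 1]
  refine Summable.of_nonneg_of_le (fun _ => ENNReal.toReal_nonneg) (fun n => ?_)
    (hpow.mul_left (Real.exp δ * Real.log δ ^ (-δ)))
  calc (μ (ULIL δ (n + 1))).toReal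
      ≤ Real.exp δ * Real.exp (-δ * Real.log (Real.log (⌈δ ^ (n + 1)⌉₊ : ℝ))) :=
        ENNReal.toReal_le_of_le_ofReal (by positivity) (measure_ULIL_le hμ hδ (n + 1))
    _ ≤ Real.exp δ * Real.log δ ^ (-δ) * ((n + 1 : ℕ) : ℝ) ^ (-δ) := by
        rw [mul_assoc]
        exact mul_le_mul_of_nonneg_left
          (exp_neg_mul_log_log_ceil_pow_le hδ (Nat.le_add_left 1 n)) (Real.exp_pos δ).le
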